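/- Let A be a noetherian commutative ring graded by an abelian group ι, let Q be a G-primary homogeneous ideal of A, set P = (√Q)*, and let I be a homogeneous ideal of A. Then: (i) if I ⊆ Q, then the colon ideal Q : I equals A; (ii) if I ⊄ Q, then Q : I is a G-primary homogeneous ideal with (√(Q : I))* = P; (iii) if I ⊄ P, then Q : I = Q. -/
import Mathlib

/-- The colon of homogeneous ideals is homogeneous. -/
theorem Ideal.IsHomogeneous.colon_aux {ι : Type*} [AddCommGroup ι] [DecidableEq ι] {A : Type*}
    [CommRing A] (𝒜 : ι → AddSubgroup A) [GradedRing 𝒜] {Q I : Ideal A}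
    (hQ : Q.IsHomogeneous 𝒜) (hI : I.IsHomogeneous 𝒜) :
    (Submodule.colon Q I).IsHomogeneous 𝒜 := by
  intro n a ha
  rw [Submodule.mem_colon] at ha ⊢
  intro x hx
  classical
  rw [smul_eq_mul, ← DirectSum.sum_support_decompose 𝒜 x, Finset.mul_sum]
  refine Ideal.sum_mem _ fun m _ => ?_
  have h1 : (a * (DirectSum.decompose 𝒜 x m : A)) ∈ Q := by
    simpa using ha _ (hI m hx)
  have h2 := hQ (n + m) h1
  rwa [DirectSum.coe_decompose_mul_add_of_right_mem 𝒜 (SetLike.coe_mem _)] at h2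

theorem le_colon_iff_aux {A : Type*} [CommRing A] (Q I J : Ideal A) :
    J ≤ Submodule.colon Q I ↔ J * I ≤ Q := by
  rw [Ideal.mul_le]
  constructor
  · intro h r hr s hs
    simpa using Submodule.mem_colon.mp (h hr) s hs
  · intro h j hj
    exact Submodule.mem_colon.mpr fun p hp => by simpa using h j hj p hp

/-- A homogeneous ideal `Q` of a graded ring `A` is `G`-primary if `Q ≠ A` and for all
homogeneous ideals `I`, `J` with `I·J ⊆ Q` and `J ⊄ Q`, one has `I ⊆ (√Q)*`. -/
def Ideal.IsGPrimary {ι : Type*} [AddCommGroup ι] [DecidableEq ι] {A : Type*} [CommRing A]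
    (𝒜 : ι → AddSubgroup A) [GradedRing 𝒜] (Q : Ideal A) : Prop :=
  Q ≠ ⊤ ∧ ∀ I J : Ideal A, I.IsHomogeneous 𝒜 → J.IsHomogeneous 𝒜 →
    I * J ≤ Q → ¬ J ≤ Q → I ≤ (Q.radical.homogeneousCore 𝒜).toIdeal

/-- Let `Q` be a `G`-primary homogeneous ideal of a noetherian graded ring `A`, set
`P = (√Q)*`, and let `I` be a homogeneous ideal.  Then
(i) if `I ⊆ Q` then `Q : I = A`;
(ii) if `I ⊄ Q` then `Q : I` is a `G`-primary homogeneous ideal with `G`-radical `P`;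
(iii) if `I ⊄ P` then `Q : I = Q`. -/
theorem Ideal.IsGPrimary.colon {ι : Type*} [AddCommGroup ι] [DecidableEq ι]
    {A : Type*} [CommRing A] [IsNoetherianRing A]
    (𝒜 : ι → AddSubgroup A) [GradedRing 𝒜] (Q P I : Ideal A)
    (hQhom : Q.IsHomogeneous 𝒜) (hQ : Q.IsGPrimary 𝒜)
    (hP : P = (Q.radical.homogeneousCore 𝒜).toIdeal) (hIhom : I.IsHomogeneous 𝒜) :
    (I ≤ Q → Submodule.colon Q I = ⊤) ∧
    (¬ I ≤ Q → (Submodule.colon Q I).IsGPrimary 𝒜 ∧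
      ((Submodule.colon Q I).radical.homogeneousCore 𝒜).toIdeal = P) ∧
    (¬ I ≤ P → Submodule.colon Q I = Q) := by
  have hchom : (Submodule.colon Q I).IsHomogeneous 𝒜 := hQhom.colon_aux 𝒜 hIhom
  have hQle : Q ≤ Submodule.colon Q I := by
    rw [le_colon_iff_aux]
    exact Ideal.mul_le.mpr fun r hr s _ => Q.mul_mem_right s hr
  have hcmul : Submodule.colon Q I * I ≤ Q := (le_colon_iff_aux Q I _).mp le_rfl
  have hQP : Q ≤ P := by
    rw [hP]
    exact (Ideal.homogeneousCore.gc 𝒜 ⟨Q, hQhom⟩ Q.radical).mp Q.le_radical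
  refine ⟨fun hIQ => ?_, fun hIQ => ?_, fun hIP => ?_⟩
  · rw [eq_top_iff]
    intro a _
    exact Submodule.mem_colon.mpr fun p hp => by simpa using Q.mul_mem_left a (hIQ hp)
  · -- (ii)
    have hcP : Submodule.colon Q I ≤ P :=
      hP ▸ hQ.2 _ I hchom hIhom hcmul hIQ
    have hrad : (Submodule.colon Q I).radical = Q.radical := by
      apply le_antisymm
      · rw [← Ideal.radical_idem (I := Q)]
        exact Ideal.radical_mono (hcP.trans (hP ▸ Q.radical.toIdeal_homogeneousCore_le 𝒜))
      · exact Ideal.radical_mono hQle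
    refine ⟨⟨?_, ?_⟩, by rw [hrad, ← hP]⟩
    · intro h
      refine hIQ ?_
      have := (le_colon_iff_aux Q I ⊤).mp (h ▸ le_rfl)
      rwa [top_mul] at this
    · intro I' J' hI' hJ' hmul hJ'c
      rw [hrad, ← hP]
      refine hP ▸ hQ.2 I' (J' * I) hI' (hJ'.mul hIhom) ?_ ?_
      · rw [← mul_assoc]
        exact le_trans (Ideal.mul_mono_left hmul) hcmul
      · exact fun h => hJ'c ((le_colon_iff_aux Q I J').mpr h)
  · -- (iii)
    refine le_antisymm ?_ hQle
    by_contra hc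
    have := hQ.2 I (Submodule.colon Q I) hIhom hchom (by rw [mul_comm]; exact hcmul)
      hc
    exact hIP (hP ▸ this)
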